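/- arXiv:1511.07223 — 10 statements merged into one kernel-verified Lean document; each statement's English description precedes it below -/
import Mathlib

section
/- (Proposition 4.1, forward direction) Suppose (Ψ*, ρ*) with ρ* ∈ Γ minimizes K over all pairs (Ψ, ρ) with Ψ : Fin L → E and ρ ∈ Γ, i.e. K(Ψ*, ρ*) ≤ K(Ψ, ρ) for all Ψ : Fin L → E and all ρ ∈ Γ. Then the pair (W_{ρ*} Ψ*, ρ*) belongs to the support-constrained domain D and minimizes F over D, i.e. F(W_{ρ*} Ψ*, ρ*) ≤ F(Φ, ρ) for every (Φ, ρ) ∈ D. -/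
open Finset RealInnerProductSpace

noncomputable section

/-- Layers live in Euclidean space. -/
abbrev Eu (n : ℕ) := EuclideanSpace ℝ (Fin n)

/-- Block scaling `(W_ρ Ψ) l = √(ρ l) • Ψ l`. -/
def Wmap {n L : ℕ} (ρ : Fin L → ℝ) (Ψ : Fin L → Eu n) : Fin L → Eu n :=
  fun l => Real.sqrt (ρ l) • Ψ l

/-- Pseudoinverse block scaling `(W_ρ† Φ) l = (√(ρ l))⁻¹ • Φ l` if `ρ l ≠ 0`, else `0`. -/
def Wdag {n L : ℕ} (ρ : Fin L → ℝ) (Φ : Fin L → Eu n) : Fin L → Eu n :=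
  fun l => if ρ l ≠ 0 then (Real.sqrt (ρ l))⁻¹ • Φ l else 0

/-- Admissible strength set `Γ(e)` for clusters `B` with cluster energies `e`. -/
def Gam {L N : ℕ} (B : Fin L → Fin N) (e : Fin N → ℝ) : Set (Fin L → ℝ) :=
  {ρ | (∀ l, 0 ≤ ρ l) ∧ ∀ i, ∑ l ∈ Finset.univ.filter (fun l => B l = i), ρ l = e i}

/-- The functional `K(Ψ, ρ) = ‖A (W_ρ Ψ) − φ‖² + α ∑ l ‖S (Ψ l)‖²`. -/
def Kfun {n m L : ℕ} (A : (Fin L → Eu n) →ₗ[ℝ] Eu m) (φ : Eu m)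
    (S : Eu n ≃ₗ[ℝ] Eu n) (α : ℝ) (Ψ : Fin L → Eu n) (ρ : Fin L → ℝ) : ℝ :=
  ‖A (Wmap ρ Ψ) - φ‖ ^ 2 + α * ∑ l, ‖S (Ψ l)‖ ^ 2

/-- The functional `F(Φ, ρ) = ‖A Φ − φ‖² + α ∑ l ‖S ((W_ρ† Φ) l)‖²`. -/
def Ffun {n m L : ℕ} (A : (Fin L → Eu n) →ₗ[ℝ] Eu m) (φ : Eu m)
    (S : Eu n ≃ₗ[ℝ] Eu n) (α : ℝ) (Φ : Fin L → Eu n) (ρ : Fin L → ℝ) : ℝ :=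
  ‖A Φ - φ‖ ^ 2 + α * ∑ l, ‖S (Wdag ρ Φ l)‖ ^ 2

/-- The reduced functional `G(Φ) = ‖A Φ − φ‖² + α ∑ i (d i)⁻¹ (∑_{B l = i} ‖S (Φ l)‖)²`. -/
def Gfun {n m L N : ℕ} (A : (Fin L → Eu n) →ₗ[ℝ] Eu m) (φ : Eu m)
    (S : Eu n ≃ₗ[ℝ] Eu n) (α : ℝ) (B : Fin L → Fin N) (d : Fin N → ℝ)
    (Φ : Fin L → Eu n) : ℝ :=
  ‖A Φ - φ‖ ^ 2 +
    α * ∑ i, (d i)⁻¹ * (∑ l ∈ Finset.univ.filter (fun l => B l = i), ‖S (Φ l)‖) ^ 2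

/-- The support-constrained domain `D`. -/
def Dom {n L N : ℕ} (B : Fin L → Fin N) (d : Fin N → ℝ) :
    Set ((Fin L → Eu n) × (Fin L → ℝ)) :=
  {p | p.2 ∈ Gam B d ∧ ∀ l, p.2 l = 0 → p.1 l = 0}

end

/-- Proposition 4.1, forward direction. -/
theorem stmt0 {n m L N : ℕ} (hL : 1 ≤ L)
    (A : (Fin L → Eu n) →ₗ[ℝ] Eu m) (φ : Eu m) (S : Eu n ≃ₗ[ℝ] Eu n)
    {α : ℝ} (hα : 0 < α)
    {B : Fin L → Fin N} (hB : Function.Surjective B)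
    {d : Fin N → ℝ} (hd : ∀ i, 0 < d i)
    (Ψs : Fin L → Eu n) (ρs : Fin L → ℝ) (hρs : ρs ∈ Gam B d)
    (hmin : ∀ (Ψ : Fin L → Eu n), ∀ ρ ∈ Gam B d,
      Kfun A φ S α Ψs ρs ≤ Kfun A φ S α Ψ ρ) :
    (Wmap ρs Ψs, ρs) ∈ Dom B d ∧
      ∀ p ∈ Dom (n := n) B d,
        Ffun A φ S α (Wmap ρs Ψs) ρs ≤ Ffun A φ S α p.1 p.2 := by
  obtain ⟨hρnn, hρsum⟩ := hρs
  constructor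
  · refine ⟨⟨hρnn, hρsum⟩, fun l hl => ?_⟩
    have h0 : ρs l = 0 := hl
    simp [Wmap, h0]
  · rintro ⟨Φ, ρ⟩ ⟨⟨hρnn', hρsum'⟩, hsupp⟩
    have hWdW : Wmap ρ (Wdag ρ Φ) = Φ := by
      funext l
      by_cases h : ρ l = 0
      · simp [Wmap, Wdag, h, hsupp l h]
        exact (hsupp l h).symm
      · have hpos : 0 < ρ l := lt_of_le_of_ne (hρnn' l) (Ne.symm h)
        have hs : Real.sqrt (ρ l) ≠ 0 := ne_of_gt (Real.sqrt_pos.mpr hpos)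
        simp [Wmap, Wdag, h, smul_smul, mul_inv_cancel₀ hs]
    have h1 : Ffun A φ S α Φ ρ = Kfun A φ S α (Wdag ρ Φ) ρ := by
      simp [Ffun, Kfun, hWdW]
    have h2 : Ffun A φ S α (Wmap ρs Ψs) ρs ≤ Kfun A φ S α Ψs ρs := by
      unfold Ffun Kfun
      refine add_le_add le_rfl (mul_le_mul_of_nonneg_left (Finset.sum_le_sum fun l _ => ?_) hα.le)
      by_cases h : ρs l = 0
      · simp [Wdag, Wmap, h]
      · have hpos : 0 < ρs l := lt_of_le_of_ne (hρnn l) (Ne.symm h)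
        have hs : Real.sqrt (ρs l) ≠ 0 := ne_of_gt (Real.sqrt_pos.mpr hpos)
        simp [Wdag, Wmap, h, smul_smul, inv_mul_cancel₀ hs]
    calc Ffun A φ S α (Wmap ρs Ψs) ρs ≤ Kfun A φ S α Ψs ρs := h2
      _ ≤ Kfun A φ S α (Wdag ρ Φ) ρ := hmin _ _ ⟨hρnn', hρsum'⟩
      _ = Ffun A φ S α Φ ρ := h1.symm
end

section
/- (Proposition 4.1, reverse direction) Suppose (Φ*, ρ*) ∈ D minimizes F over the support-constrained domain D, i.e. F(Φ*, ρ*) ≤ F(Φ, ρ) for all (Φ, ρ) ∈ D. Then the pair (W_{ρ*}† Φ*, ρ*) minimizes K over all pairs (Ψ, ρ) with Ψ : Fin L → E and ρ ∈ Γ, i.e. K(W_{ρ*}† Φ*, ρ*) ≤ K(Ψ, ρ) for all Ψ : Fin L → E and all ρ ∈ Γ. -/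
open Finset RealInnerProductSpace

/-- Proposition 4.1, reverse direction. -/
theorem stmt1 {n m L N : ℕ} (hL : 1 ≤ L)
    (A : (Fin L → Eu n) →ₗ[ℝ] Eu m) (φ : Eu m) (S : Eu n ≃ₗ[ℝ] Eu n)
    {α : ℝ} (hα : 0 < α)
    {B : Fin L → Fin N} (hB : Function.Surjective B)
    {d : Fin N → ℝ} (hd : ∀ i, 0 < d i)
    (Φs : Fin L → Eu n) (ρs : Fin L → ℝ) (hmem : (Φs, ρs) ∈ Dom B d)
    (hmin : ∀ p ∈ Dom (n := n) B d,
      Ffun A φ S α Φs ρs ≤ Ffun A φ S α p.1 p.2) :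
    ∀ (Ψ : Fin L → Eu n), ∀ ρ ∈ Gam B d,
      Kfun A φ S α (Wdag ρs Φs) ρs ≤ Kfun A φ S α Ψ ρ := by
  intro Ψ ρ hρ
  have hW : Wmap ρs (Wdag ρs Φs) = Φs := by
    funext l
    by_cases h : ρs l = 0
    · simp [Wmap, Wdag, h, (hmem.2 l h).symm]
    · have hpos : 0 < ρs l := lt_of_le_of_ne (hmem.1.1 l) (Ne.symm h)
      have hs : Real.sqrt (ρs l) ≠ 0 := by positivity
      simp [Wmap, Wdag, h, smul_smul, mul_inv_cancel₀ hs]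
  have hKeq : Kfun A φ S α (Wdag ρs Φs) ρs = Ffun A φ S α Φs ρs := by
    simp only [Kfun, Ffun, hW]
  have hmemD : (Wmap ρ Ψ, ρ) ∈ Dom B d := by
    refine ⟨hρ, fun l hl => ?_⟩
    show Real.sqrt (ρ l) • Ψ l = 0
    rw [show ρ l = 0 from hl, Real.sqrt_zero, zero_smul]
  have h2 : Ffun A φ S α (Wmap ρ Ψ) ρ ≤ Kfun A φ S α Ψ ρ := by
    simp only [Ffun, Kfun]
    refine add_le_add (le_refl _) (mul_le_mul_of_nonneg_left (Finset.sum_le_sum fun l _ => ?_) hα.le)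
    by_cases h : ρ l = 0
    · simp [Wdag, h]
    · have hpos : 0 < ρ l := lt_of_le_of_ne (hρ.1 l) (Ne.symm h)
      have hs : Real.sqrt (ρ l) ≠ 0 := by positivity
      simp [Wdag, Wmap, h, smul_smul, inv_mul_cancel₀ hs]
  rw [hKeq]
  exact le_trans (hmin (Wmap ρ Ψ, ρ) hmemD) h2
end

section
/- (Vanishing lemma from the proof of Proposition 4.1) Suppose (Ψ*, ρ*) with ρ* ∈ Γ minimizes K over all pairs (Ψ, ρ) with Ψ : Fin L → E and ρ ∈ Γ. Then Ψ* vanishes on every layer of zero strength: for every l, ρ* l = 0 implies Ψ* l = 0. -/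
open Finset RealInnerProductSpace

/-- Vanishing lemma from the proof of Proposition 4.1. -/
theorem stmt2 {n m L N : ℕ} (hL : 1 ≤ L)
    (A : (Fin L → Eu n) →ₗ[ℝ] Eu m) (φ : Eu m) (S : Eu n ≃ₗ[ℝ] Eu n)
    {α : ℝ} (hα : 0 < α)
    {B : Fin L → Fin N} (hB : Function.Surjective B)
    {d : Fin N → ℝ} (hd : ∀ i, 0 < d i)
    (Ψs : Fin L → Eu n) (ρs : Fin L → ℝ) (hρs : ρs ∈ Gam B d)
    (hmin : ∀ (Ψ : Fin L → Eu n), ∀ ρ ∈ Gam B d,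
      Kfun A φ S α Ψs ρs ≤ Kfun A φ S α Ψ ρ) :
    ∀ l, ρs l = 0 → Ψs l = 0 := by
  intro l hl
  set Ψ' := Function.update Ψs l 0 with hΨ'
  have hW : Wmap ρs Ψ' = Wmap ρs Ψs := by
    funext j
    by_cases hj : j = l
    · subst hj; simp [Wmap, hΨ', hl]
    · simp [Wmap, hΨ', Function.update_of_ne hj]
  have hle := hmin Ψ' ρs hρs
  rw [Kfun, Kfun, hW] at hle
  have hsum : ∑ j, ‖S (Ψ' j)‖ ^ 2 = ∑ j ∈ Finset.univ.erase l, ‖S (Ψs j)‖ ^ 2 := by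
    rw [← Finset.add_sum_erase _ (fun j => ‖S (Ψ' j)‖ ^ 2) (Finset.mem_univ l)]
    have h1 : ‖S (Ψ' l)‖ ^ 2 = 0 := by simp [hΨ']
    rw [h1, zero_add]
    exact Finset.sum_congr rfl fun j hj => by
      rw [hΨ', Function.update_of_ne (Finset.ne_of_mem_erase hj)]
  have hsum2 : ∑ j, ‖S (Ψs j)‖ ^ 2
      = ‖S (Ψs l)‖ ^ 2 + ∑ j ∈ Finset.univ.erase l, ‖S (Ψs j)‖ ^ 2 :=
    (Finset.add_sum_erase _ _ (Finset.mem_univ l)).symm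
  rw [hsum, hsum2] at hle
  have hnn : ‖S (Ψs l)‖ ^ 2 ≤ 0 := by nlinarith
  have : ‖S (Ψs l)‖ = 0 := by nlinarith [norm_nonneg (S (Ψs l)), sq_nonneg ‖S (Ψs l)‖]
  have := norm_eq_zero.mp this
  exact (map_eq_zero_iff S S.injective).mp this
end

section
/- (Proposition 4.2, part 1) Suppose (Φ*, ρ*) ∈ D minimizes F over the support-constrained domain D, i.e. F(Φ*, ρ*) ≤ F(Φ, ρ) for all (Φ, ρ) ∈ D. Then Φ* is a global minimizer of G: G(Φ*) ≤ G(Φ) for every Φ : Fin L → E. -/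
open Finset RealInnerProductSpace

set_option maxHeartbeats 2000000 in
/-- Proposition 4.2, part 1. -/
theorem stmt4 {n m L N : ℕ} (hL : 1 ≤ L)
    (A : (Fin L → Eu n) →ₗ[ℝ] Eu m) (φ : Eu m) (S : Eu n ≃ₗ[ℝ] Eu n)
    {α : ℝ} (hα : 0 < α)
    {B : Fin L → Fin N} (hB : Function.Surjective B)
    {d : Fin N → ℝ} (hd : ∀ i, 0 < d i)
    (Φs : Fin L → Eu n) (ρs : Fin L → ℝ) (hmem : (Φs, ρs) ∈ Dom B d)
    (hmin : ∀ p ∈ Dom (n := n) B d,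
      Ffun A φ S α Φs ρs ≤ Ffun A φ S α p.1 p.2) :
    ∀ Φ : Fin L → Eu n, Gfun A φ S α B d Φs ≤ Gfun A φ S α B d Φ := by
  classical
  intro Φ
  -- cluster norms
  let σ : Fin N → ℝ := fun i => ∑ l ∈ Finset.univ.filter (fun l => B l = i), ‖S (Φ l)‖
  have hσdef : ∀ i, σ i = ∑ l ∈ Finset.univ.filter (fun l => B l = i), ‖S (Φ l)‖ :=
    fun i => rfl
  have hσ0 : ∀ i, 0 ≤ σ i := fun i => Finset.sum_nonneg fun l _ => norm_nonneg _
  have hcard : ∀ i : Fin N, 0 < ((Finset.univ.filter (fun l => B l = i)).card : ℝ) := by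
    intro i
    obtain ⟨l, hl⟩ := hB i
    have : l ∈ Finset.univ.filter (fun l => B l = i) := by simp [hl]
    exact_mod_cast Finset.card_pos.2 ⟨l, this⟩
  -- the optimal strengths for Φ
  let ρ : Fin L → ℝ := fun l =>
    if σ (B l) = 0 then d (B l) / ((Finset.univ.filter (fun l' => B l' = B l)).card : ℝ)
    else d (B l) * ‖S (Φ l)‖ / σ (B l)
  have hρ1 : ∀ l, σ (B l) = 0 →
      ρ l = d (B l) / ((Finset.univ.filter (fun l' => B l' = B l)).card : ℝ) :=
    fun l h => if_pos h
  have hρ2 : ∀ l, σ (B l) ≠ 0 → ρ l = d (B l) * ‖S (Φ l)‖ / σ (B l) :=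
    fun l h => if_neg h
  have hρ0 : ∀ l, 0 ≤ ρ l := by
    intro l
    by_cases h : σ (B l) = 0
    · rw [hρ1 l h]
      exact div_nonneg (hd (B l)).le (hcard (B l)).le
    · rw [hρ2 l h]
      exact div_nonneg (mul_nonneg (hd (B l)).le (norm_nonneg _)) (hσ0 (B l))
  have hSzero : ∀ l, ‖S (Φ l)‖ = 0 → Φ l = 0 := by
    intro l h
    exact (S.map_eq_zero_iff).1 (norm_eq_zero.1 h)
  have hσzero : ∀ i, σ i = 0 → ∀ l, B l = i → ‖S (Φ l)‖ = 0 := by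
    intro i hi l hl
    rw [hσdef] at hi
    have := (Finset.sum_eq_zero_iff_of_nonneg (fun l _ => norm_nonneg (S (Φ l)))).1 hi
    exact this l (by simp [hl])
  have hmemρ : (Φ, ρ) ∈ Dom (n := n) B d := by
    refine ⟨⟨hρ0, ?_⟩, ?_⟩
    · intro i
      by_cases h : σ i = 0
      · have h1 : ∀ l ∈ Finset.univ.filter (fun l => B l = i),
            ρ l = d i / ((Finset.univ.filter (fun l' => B l' = i)).card : ℝ) := by
          intro l hl
          have hBl : B l = i := by simpa using hl
          rw [hρ1 l (by rw [hBl]; exact h), hBl]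
        rw [Finset.sum_congr rfl h1, Finset.sum_const, nsmul_eq_mul,
          mul_div_cancel₀ _ (hcard i).ne']
      · have h1 : ∀ l ∈ Finset.univ.filter (fun l => B l = i),
            ρ l = d i * ‖S (Φ l)‖ / σ i := by
          intro l hl
          have hBl : B l = i := by simpa using hl
          rw [hρ2 l (by rw [hBl]; exact h), hBl]
        rw [Finset.sum_congr rfl h1]
        have h2 : ∑ l ∈ Finset.univ.filter (fun l => B l = i), d i * ‖S (Φ l)‖ / σ i
            = (d i / σ i) * σ i := by
          rw [Finset.mul_sum, hσdef]
          exact Finset.sum_congr rfl fun l _ => by ring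
        rw [h2, div_mul_cancel₀ _ h]
    · intro l hl
      simp only at hl ⊢
      by_cases h : σ (B l) = 0
      · exact hSzero l (hσzero (B l) h l rfl)
      · rw [hρ2 l h] at hl
        rcases div_eq_zero_iff.1 hl with h' | h'
        · rcases mul_eq_zero.1 h' with h'' | h''
          · exact absurd h'' (hd (B l)).ne'
          · exact hSzero l h''
        · exact absurd h' h
  -- key identity: F(Φ, ρ) = G(Φ)
  have hFG : Ffun A φ S α Φ ρ = Gfun A φ S α B d Φ := by
    unfold Ffun Gfun
    congr 1
    congr 1
    rw [← Finset.sum_fiberwise Finset.univ B (fun l => ‖S (Wdag ρ Φ l)‖ ^ 2)]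
    refine Finset.sum_congr rfl fun i _ => ?_
    rw [← hσdef]
    by_cases h : σ i = 0
    · have h1 : ∀ l ∈ Finset.univ.filter (fun l => B l = i), ‖S (Wdag ρ Φ l)‖ ^ 2 = 0 := by
        intro l hl
        have hBl : B l = i := by simpa using hl
        have hΦl : Φ l = 0 := hSzero l (hσzero i h l hBl)
        unfold Wdag
        by_cases hz : ρ l = 0 <;> simp [hz, hΦl]
      rw [Finset.sum_eq_zero h1, h]
      ring
    · have h1 : ∀ l ∈ Finset.univ.filter (fun l => B l = i),
          ‖S (Wdag ρ Φ l)‖ ^ 2 = σ i * ‖S (Φ l)‖ / d i := by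
        intro l hl
        have hBl : B l = i := by simpa using hl
        by_cases hz : ‖S (Φ l)‖ = 0
        · have hΦl : Φ l = 0 := hSzero l hz
          unfold Wdag
          by_cases hzz : ρ l = 0 <;> simp [hzz, hΦl, hz]
        · have hσpos : 0 < σ i := (hσ0 i).lt_of_ne (Ne.symm h)
          have hρl : ρ l = d i * ‖S (Φ l)‖ / σ i := by
            rw [hρ2 l (by rw [hBl]; exact h), hBl]
          have h2 := (norm_nonneg (S (Φ l))).lt_of_ne (Ne.symm hz)
          have hρpos : 0 < ρ l := by
            rw [hρl]
            exact div_pos (mul_pos (hd i) h2) hσpos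
          have hW : Wdag ρ Φ l = (Real.sqrt (ρ l))⁻¹ • Φ l := if_pos hρpos.ne'
          rw [hW, map_smul, norm_smul]
          have hs : Real.sqrt (ρ l) ^ 2 = ρ l := Real.sq_sqrt hρpos.le
          rw [mul_pow, norm_inv, Real.norm_eq_abs, abs_of_nonneg (Real.sqrt_nonneg _),
            inv_pow, hs, hρl]
          have key : ∀ a b c : ℝ, a ≠ 0 → b ≠ 0 → c ≠ 0 →
              (a * b / c)⁻¹ * b ^ 2 = c * b / a := by
            intros a b c ha hb hc; field_simp
          exact key _ _ _ (hd i).ne' hz h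
      rw [Finset.sum_congr rfl h1]
      have h2 : ∑ l ∈ Finset.univ.filter (fun l => B l = i), σ i * ‖S (Φ l)‖ / d i
          = (σ i / d i) * σ i := by
        rw [Finset.mul_sum, hσdef]
        exact Finset.sum_congr rfl fun l _ => by ring
      rw [h2]
      have key : ∀ a c : ℝ, c / a * c = a⁻¹ * c ^ 2 := by intros a c; ring
      exact key _ _
  -- Cauchy–Schwarz step: G(Φs) ≤ F(Φs, ρs)
  have hGF : Gfun A φ S α B d Φs ≤ Ffun A φ S α Φs ρs := by
    unfold Ffun Gfun
    gcongr
    rw [← Finset.sum_fiberwise Finset.univ B (fun l => ‖S (Wdag ρs Φs l)‖ ^ 2)]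
    refine Finset.sum_le_sum fun i _ => ?_
    obtain ⟨⟨hρs0, hρssum⟩, hsupp⟩ := hmem
    have key : ∀ l, ‖S (Φs l)‖ = Real.sqrt (ρs l) * ‖S (Wdag ρs Φs l)‖ := by
      intro l
      by_cases h : ρs l = 0
      · have h0 : Φs l = 0 := hsupp l h
        simp [Wdag, h0, h]
      · have hpos : 0 < ρs l := (hρs0 l).lt_of_ne (Ne.symm h)
        have hW : Wdag ρs Φs l = (Real.sqrt (ρs l))⁻¹ • Φs l := if_pos h
        rw [hW, map_smul, norm_smul, norm_inv, Real.norm_eq_abs,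
          abs_of_nonneg (Real.sqrt_nonneg _), ← mul_assoc,
          mul_inv_cancel₀ (Real.sqrt_pos.2 hpos).ne', one_mul]
    have cs := Finset.sum_mul_sq_le_sq_mul_sq (Finset.univ.filter (fun l => B l = i))
      (fun l => Real.sqrt (ρs l)) (fun l => ‖S (Wdag ρs Φs l)‖)
    have hsq : ∑ l ∈ Finset.univ.filter (fun l => B l = i), Real.sqrt (ρs l) ^ 2 = d i := by
      rw [← hρssum i]
      exact Finset.sum_congr rfl fun l _ => Real.sq_sqrt (hρs0 l)
    rw [hsq] at cs
    rw [Finset.sum_congr rfl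
      (fun l (_ : l ∈ Finset.univ.filter (fun l => B l = i)) => key l)]
    calc (d i)⁻¹ * (∑ l ∈ Finset.univ.filter (fun l => B l = i),
            Real.sqrt (ρs l) * ‖S (Wdag ρs Φs l)‖) ^ 2
        ≤ (d i)⁻¹ * (d i * ∑ l ∈ Finset.univ.filter (fun l => B l = i),
            ‖S (Wdag ρs Φs l)‖ ^ 2) :=
          mul_le_mul_of_nonneg_left cs (inv_nonneg.2 (hd i).le)
      _ = ∑ l ∈ Finset.univ.filter (fun l => B l = i), ‖S (Wdag ρs Φs l)‖ ^ 2 := by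
          rw [← mul_assoc, inv_mul_cancel₀ (hd i).ne', one_mul]
  calc Gfun A φ S α B d Φs ≤ Ffun A φ S α Φs ρs := hGF
    _ ≤ Ffun A φ S α Φ ρ := hmin (Φ, ρ) hmemρ
    _ = Gfun A φ S α B d Φ := hFG
end

section
/- (Proposition 4.2, part 2: strength formula) Suppose (Φ*, ρ*) ∈ D minimizes F over the support-constrained domain D. Let i : Fin N be a cluster for which the restriction of Φ* to the cluster is nonzero, i.e. there exists l with B l = i and Φ* l ≠ 0. Then for every layer l with B l = i, the strength is uniquely determined by ρ* l = d i · ‖S (Φ* l)‖ / (∑_{j with B j = i} ‖S (Φ* j)‖). -/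
open Finset RealInnerProductSpace

theorem wdag_norm_sq {n L : ℕ} (S : Eu n ≃ₗ[ℝ] Eu n) (ρ : Fin L → ℝ) (Φ : Fin L → Eu n)
    (l : Fin L) (h : 0 ≤ ρ l) :
    ‖S (Wdag ρ Φ l)‖ ^ 2 = (ρ l)⁻¹ * ‖S (Φ l)‖ ^ 2 := by
  unfold Wdag
  by_cases hρ : ρ l = 0
  · simp [hρ]
  · rw [if_pos hρ, map_smul, norm_smul, mul_pow, norm_inv, Real.norm_eq_abs,
      abs_of_nonneg (Real.sqrt_nonneg _), inv_pow, Real.sq_sqrt h]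

/-- Proposition 4.2, part 2: strength formula. -/
theorem stmt5 {n m L N : ℕ} (hL : 1 ≤ L)
    (A : (Fin L → Eu n) →ₗ[ℝ] Eu m) (φ : Eu m) (S : Eu n ≃ₗ[ℝ] Eu n)
    {α : ℝ} (hα : 0 < α)
    {B : Fin L → Fin N} (hB : Function.Surjective B)
    {d : Fin N → ℝ} (hd : ∀ i, 0 < d i)
    (Φs : Fin L → Eu n) (ρs : Fin L → ℝ) (hmem : (Φs, ρs) ∈ Dom B d)
    (hmin : ∀ p ∈ Dom (n := n) B d,
      Ffun A φ S α Φs ρs ≤ Ffun A φ S α p.1 p.2)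
    (i : Fin N) (hi : ∃ l, B l = i ∧ Φs l ≠ 0) :
    ∀ l, B l = i →
      ρs l = d i * ‖S (Φs l)‖ /
        (∑ j ∈ Finset.univ.filter (fun j => B j = i), ‖S (Φs j)‖) := by
  obtain ⟨⟨hρnn, hρsum⟩, hsupp⟩ := hmem
  replace hρnn : ∀ l, 0 ≤ ρs l := hρnn
  replace hρsum : ∀ i, ∑ l ∈ Finset.univ.filter (fun l => B l = i), ρs l = d i := hρsum
  replace hsupp : ∀ l, ρs l = 0 → Φs l = 0 := hsupp
  set c : Fin L → ℝ := fun l => ‖S (Φs l)‖ with hc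
  have hcnn : ∀ l, 0 ≤ c l := fun l => norm_nonneg _
  have hc0 : ∀ l, ρs l = 0 → c l = 0 := by
    intro l h
    simp [hc, hsupp l h]
  set T : ℝ := ∑ j ∈ Finset.univ.filter (fun j => B j = i), c j with hT
  have hTpos : 0 < T := by
    obtain ⟨l0, hl0, hΦ0⟩ := hi
    refine Finset.sum_pos' (fun j _ => hcnn j) ⟨l0, by simp [hl0], ?_⟩
    simp only [hc]
    rw [norm_pos_iff]
    simpa using hΦ0
  -- competitor
  set ρ' : Fin L → ℝ := fun l => if B l = i then d i * c l / T else ρs l with hρ'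
  have hmem' : (Φs, ρ') ∈ Dom B d := by
    refine ⟨⟨?_, ?_⟩, ?_⟩
    · intro l; dsimp only [ρ']
      split
      · exact div_nonneg (mul_nonneg (hd i).le (hcnn l)) hTpos.le
      · exact hρnn l
    · intro i'
      by_cases h : i' = i
      · simp only [h]
        have hcong : ∀ l ∈ Finset.univ.filter (fun l => B l = i), ρ' l = d i * c l / T := by
          intro l hl
          simp only [Finset.mem_filter] at hl
          simp [ρ', hl.2]
        rw [Finset.sum_congr rfl hcong]
        have : ∑ l ∈ Finset.univ.filter (fun l => B l = i), d i * c l / T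
            = d i * (∑ l ∈ Finset.univ.filter (fun l => B l = i), c l) / T := by
          rw [Finset.mul_sum, Finset.sum_div]
        rw [this, ← hT]
        field_simp
      · rw [← hρsum i']
        refine Finset.sum_congr rfl fun l hl => ?_
        simp only [Finset.mem_filter] at hl
        have : B l ≠ i := by rw [hl.2]; exact h
        simp [ρ', this]
    · intro l h0
      by_cases hBl : B l = i
      · simp only [ρ', hBl, if_true] at h0
        have hcl : c l = 0 := by
          by_contra hne
          have : d i * c l / T ≠ 0 := by
            apply div_ne_zero (mul_ne_zero (hd i).ne' hne) hTpos.ne'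
          exact this h0
        have : S (Φs l) = 0 := by rwa [← norm_eq_zero]
        simpa using (S.map_eq_zero_iff).mp this
      · exact hsupp l (by simpa [ρ', hBl] using h0)
  -- the key inequality from minimality
  have hK := hmin (Φs, ρ') hmem'
  have hsum_le : ∑ l, ‖S (Wdag ρs Φs l)‖ ^ 2 ≤ ∑ l, ‖S (Wdag ρ' Φs l)‖ ^ 2 := by
    unfold Ffun at hK
    have := (add_le_add_iff_left (‖A Φs - φ‖ ^ 2)).mp hK
    exact le_of_mul_le_mul_left this hα
  have hρ'nn : ∀ l, 0 ≤ ρ' l := hmem'.1.1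
  rw [Finset.sum_congr rfl (fun l _ => wdag_norm_sq S ρs Φs l (hρnn l)),
      Finset.sum_congr rfl (fun l _ => wdag_norm_sq S ρ' Φs l (hρ'nn l))] at hsum_le
  -- restrict to the cluster
  have hsplit1 := Finset.sum_filter_add_sum_filter_not Finset.univ (fun l => B l = i)
      (fun l => (ρs l)⁻¹ * c l ^ 2)
  have hsplit2 := Finset.sum_filter_add_sum_filter_not Finset.univ (fun l => B l = i)
      (fun l => (ρ' l)⁻¹ * c l ^ 2)
  have hoff : ∑ l ∈ Finset.univ.filter (fun l => ¬ B l = i), (ρ' l)⁻¹ * c l ^ 2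
      = ∑ l ∈ Finset.univ.filter (fun l => ¬ B l = i), (ρs l)⁻¹ * c l ^ 2 := by
    refine Finset.sum_congr rfl fun l hl => ?_
    simp only [Finset.mem_filter] at hl
    simp [ρ', hl.2]
  have hrhs : ∑ l ∈ Finset.univ.filter (fun l => B l = i), (ρ' l)⁻¹ * c l ^ 2
      = T ^ 2 / d i := by
    have hcong : ∀ l ∈ Finset.univ.filter (fun l => B l = i),
        (ρ' l)⁻¹ * c l ^ 2 = T / d i * c l := by
      intro l hl
      simp only [Finset.mem_filter] at hl
      simp only [ρ', hl.2, if_true]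
      by_cases hcl : c l = 0
      · simp [hcl]
      · have hinv : (d i * c l / T)⁻¹ = T / (d i * c l) := by
          rw [div_eq_mul_inv, mul_inv, mul_inv, inv_inv]; ring
        rw [hinv]
        field_simp [hcl]
    rw [Finset.sum_congr rfl hcong, ← Finset.mul_sum, ← hT]
    field_simp
  have hstar : ∑ l ∈ Finset.univ.filter (fun l => B l = i), (ρs l)⁻¹ * c l ^ 2
      ≤ T ^ 2 / d i := by
    have h1 : ∑ l ∈ Finset.univ.filter (fun l => B l = i), (ρs l)⁻¹ * c l ^ 2
        ≤ ∑ l ∈ Finset.univ.filter (fun l => B l = i), (ρ' l)⁻¹ * c l ^ 2 := by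
      have := hsum_le
      rw [← hsplit1, ← hsplit2, hoff] at this
      linarith
    linarith [h1, hrhs.le, hrhs.ge]
  -- Cauchy–Schwarz vectors
  set x : EuclideanSpace ℝ (Fin L) := WithLp.toLp 2 fun l => if B l = i then Real.sqrt (ρs l) else 0 with hx
  set y : EuclideanSpace ℝ (Fin L) :=
    WithLp.toLp 2 fun l => if B l = i then Real.sqrt ((ρs l)⁻¹) * c l else 0 with hy
  have hinner : (inner ℝ x y : ℝ) = T := by
    rw [PiLp.inner_apply]
    simp only [RCLike.inner_apply, conj_trivial, hx, hy]
    rw [hT]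
    rw [Finset.sum_filter]
    refine Finset.sum_congr rfl fun l _ => ?_
    by_cases hBl : B l = i
    · simp only [hBl, if_true]
      by_cases hρl : ρs l = 0
      · simp [hρl, hc0 l hρl]
      · have hpos : 0 < ρs l := lt_of_le_of_ne (hρnn l) (Ne.symm hρl)
        rw [Real.sqrt_inv]
        field_simp [Real.sqrt_ne_zero'.mpr hpos]
    · simp [hBl]
  have hxnorm : ‖x‖ ^ 2 = d i := by
    rw [← real_inner_self_eq_norm_sq, PiLp.inner_apply]
    simp only [RCLike.inner_apply, conj_trivial, hx]
    rw [← hρsum i, Finset.sum_filter]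
    refine Finset.sum_congr rfl fun l _ => ?_
    by_cases hBl : B l = i
    · simp only [hBl, if_true]
      exact Real.mul_self_sqrt (hρnn l)
    · simp [hBl]
  have hynorm : ‖y‖ ^ 2 = ∑ l ∈ Finset.univ.filter (fun l => B l = i), (ρs l)⁻¹ * c l ^ 2 := by
    rw [← real_inner_self_eq_norm_sq, PiLp.inner_apply]
    simp only [RCLike.inner_apply, conj_trivial, hy]
    rw [Finset.sum_filter]
    refine Finset.sum_congr rfl fun l _ => ?_
    by_cases hBl : B l = i
    · simp only [hBl, if_true]
      have : Real.sqrt ((ρs l)⁻¹) * Real.sqrt ((ρs l)⁻¹) = (ρs l)⁻¹ :=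
        Real.mul_self_sqrt (inv_nonneg.mpr (hρnn l))
      ring_nf
      nlinarith [this]
    · simp [hBl]
  have hxn : ‖x‖ = Real.sqrt (d i) := by
    rw [← hxnorm, Real.sqrt_sq (norm_nonneg x)]
  have hprod_le : ‖x‖ * ‖y‖ ≤ T := by
    have h2 : (‖x‖ * ‖y‖) ^ 2 ≤ T ^ 2 := by
      rw [mul_pow, hxnorm, hynorm]
      calc d i * ∑ l ∈ Finset.univ.filter (fun l => B l = i), (ρs l)⁻¹ * c l ^ 2
          ≤ d i * (T ^ 2 / d i) := by
            exact mul_le_mul_of_nonneg_left hstar (hd i).le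
        _ = T ^ 2 := by field_simp [(hd i).ne']
    exact (abs_le_of_sq_le_sq' h2 hTpos.le).2
  have heq : (inner ℝ x y : ℝ) = ‖x‖ * ‖y‖ := by
    refine le_antisymm (real_inner_le_norm x y) ?_
    rw [hinner]
    exact hprod_le
  have hsmul : ‖y‖ • x = ‖x‖ • y := inner_eq_norm_mul_iff_real.mp heq
  have hyn : ‖y‖ = T / Real.sqrt (d i) := by
    have hsd : 0 < Real.sqrt (d i) := Real.sqrt_pos.mpr (hd i)
    have : ‖x‖ * ‖y‖ = T := by rw [← heq, hinner]
    rw [hxn] at this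
    field_simp at this ⊢
    linarith [this]
  -- conclude per layer
  intro l hBl
  have hcoord : ‖y‖ * x l = ‖x‖ * y l := by
    have h := congrFun (congrArg (fun v : EuclideanSpace ℝ (Fin L) => (v : Fin L → ℝ)) hsmul) l
    simpa [PiLp.smul_apply, smul_eq_mul] using h
  rw [hxn, hyn] at hcoord
  simp only [hx, hy, hBl, if_true, PiLp.toLp_apply] at hcoord
  -- hcoord : T / √(d i) * √(ρs l) = √(d i) * (√((ρs l)⁻¹) * c l)
  by_cases hρl : ρs l = 0
  · rw [hρl]
    have : c l = 0 := hc0 l hρl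
    simp only [hc] at this
    rw [this]
    simp
  · have hpos : 0 < ρs l := lt_of_le_of_ne (hρnn l) (Ne.symm hρl)
    have hsd : 0 < Real.sqrt (d i) := Real.sqrt_pos.mpr (hd i)
    have hsr : 0 < Real.sqrt (ρs l) := Real.sqrt_pos.mpr hpos
    have hsd2 : Real.sqrt (d i) * Real.sqrt (d i) = d i := Real.mul_self_sqrt (hd i).le
    have hsr2 : Real.sqrt (ρs l) * Real.sqrt (ρs l) = ρs l := Real.mul_self_sqrt (hρnn l)
    have hinvsqrt : Real.sqrt ((ρs l)⁻¹) = (Real.sqrt (ρs l))⁻¹ := Real.sqrt_inv _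
    rw [hinvsqrt] at hcoord
    field_simp [hsr.ne'] at hcoord
    have key : T * ρs l = d i * c l := by
      rw [sq, sq, hsr2, hsd2] at hcoord
      exact hcoord
    have hgoal : ρs l = d i * c l / T := by
      rw [eq_div_iff hTpos.ne']
      linarith [key]
    exact hgoal
end

section
/- (Partial minimization lower bound, from the proof of Proposition 4.2) For every Φ : Fin L → E and every ρ such that (Φ, ρ) ∈ D, one has G(Φ) ≤ F(Φ, ρ). -/
open Finset RealInnerProductSpace

/-- Partial minimization lower bound, from the proof of Proposition 4.2. -/
theorem stmt7 {n m L N : ℕ} (hL : 1 ≤ L)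
    (A : (Fin L → Eu n) →ₗ[ℝ] Eu m) (φ : Eu m) (S : Eu n ≃ₗ[ℝ] Eu n)
    {α : ℝ} (hα : 0 < α)
    {B : Fin L → Fin N} (hB : Function.Surjective B)
    {d : Fin N → ℝ} (hd : ∀ i, 0 < d i) :
    ∀ (Φ : Fin L → Eu n) (ρ : Fin L → ℝ), (Φ, ρ) ∈ Dom B d →
      Gfun A φ S α B d Φ ≤ Ffun A φ S α Φ ρ := by
  intro Φ ρ hmem
  obtain ⟨⟨hρ0, hρsum⟩, hsupp⟩ := hmem
  unfold Gfun Ffun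
  gcongr _ + α * ?_
  rw [← Finset.sum_fiberwise Finset.univ B (fun l => ‖S (Wdag ρ Φ l)‖ ^ 2)]
  apply Finset.sum_le_sum
  intro i _
  set T := Finset.univ.filter (fun l => B l = i) with hT
  have key : ∀ l ∈ T, ‖S (Φ l)‖ = Real.sqrt (ρ l) * ‖S (Wdag ρ Φ l)‖ := by
    intro l _
    by_cases h : ρ l = 0
    · simp only [Wdag, h]; simp only [ne_eq, not_true_eq_false, if_false]
      have h0 : Φ l = 0 := hsupp l h
      simp [h0]
    · have hpos : 0 < ρ l := lt_of_le_of_ne (hρ0 l) (Ne.symm h)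
      have hs : Real.sqrt (ρ l) ≠ 0 := ne_of_gt (Real.sqrt_pos.mpr hpos)
      simp only [Wdag, h, if_pos, ne_eq, not_false_eq_true]
      rw [map_smul, norm_smul, Real.norm_eq_abs,
        abs_of_nonneg (inv_nonneg.mpr (Real.sqrt_nonneg _))]
      field_simp
  rw [Finset.sum_congr rfl key]
  have cs := Finset.sum_mul_sq_le_sq_mul_sq T (fun l => Real.sqrt (ρ l))
    (fun l => ‖S (Wdag ρ Φ l)‖)
  have hsq : ∑ l ∈ T, Real.sqrt (ρ l) ^ 2 = d i := by
    rw [← hρsum i]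
    exact Finset.sum_congr rfl fun l _ => Real.sq_sqrt (hρ0 l)
  rw [hsq] at cs
  rw [inv_mul_le_iff₀ (hd i)]
  linarith [cs]
end

section
/- (Partial minimization attainment, from the proof of Proposition 4.2) For every Φ : Fin L → E there exists ρ : Fin L → ℝ with (Φ, ρ) ∈ D and F(Φ, ρ) = G(Φ). In particular, G(Φ) equals the minimum of F(Φ, ·) over {ρ | (Φ, ρ) ∈ D}. -/
open Finset RealInnerProductSpace

section Aux

open Finset

variable {n m L N : ℕ}

/-- Cluster norm sum. -/
noncomputable def Tfun (S : Eu n ≃ₗ[ℝ] Eu n) (B : Fin L → Fin N)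
    (Φ : Fin L → Eu n) (i : Fin N) : ℝ :=
  ∑ l ∈ Finset.univ.filter (fun l => B l = i), ‖S (Φ l)‖

/-- Optimal strengths. -/
noncomputable def rhoOpt (S : Eu n ≃ₗ[ℝ] Eu n) (B : Fin L → Fin N)
    (d : Fin N → ℝ) (Φ : Fin L → Eu n) (l : Fin L) : ℝ :=
  if Tfun S B Φ (B l) = 0 then
    d (B l) / (Finset.univ.filter (fun l' => B l' = B l)).card
  else d (B l) * ‖S (Φ l)‖ / Tfun S B Φ (B l)

lemma Tfun_nonneg (S : Eu n ≃ₗ[ℝ] Eu n) (B : Fin L → Fin N)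
    (Φ : Fin L → Eu n) (i : Fin N) : 0 ≤ Tfun S B Φ i :=
  Finset.sum_nonneg fun _ _ => norm_nonneg _

lemma wdag_term (S : Eu n ≃ₗ[ℝ] Eu n) (ρ : Fin L → ℝ) (Φ : Fin L → Eu n)
    (l : Fin L) (hρ : 0 ≤ ρ l) :
    ‖S (Wdag ρ Φ l)‖ ^ 2 = if ρ l ≠ 0 then (ρ l)⁻¹ * ‖S (Φ l)‖ ^ 2 else 0 := by
  unfold Wdag
  split_ifs with h
  · rw [map_smul, norm_smul, mul_pow, norm_inv, Real.norm_eq_abs,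
      abs_of_nonneg (Real.sqrt_nonneg _), inv_pow, Real.sq_sqrt hρ]
  · simp

/-- Cauchy–Schwarz for one fiber. -/
lemma cs_fiber (s : Finset (Fin L)) (ρ g : Fin L → ℝ)
    (hρ : ∀ l, 0 ≤ ρ l) (hg : ∀ l, 0 ≤ g l) (hsupp : ∀ l ∈ s, ρ l = 0 → g l = 0) :
    (∑ l ∈ s, g l) ^ 2 ≤
      (∑ l ∈ s, ρ l) * ∑ l ∈ s, (if ρ l ≠ 0 then (ρ l)⁻¹ * g l ^ 2 else 0) := by
  have h := Finset.sum_mul_sq_le_sq_mul_sq s (fun l => Real.sqrt (ρ l))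
      (fun l => if ρ l ≠ 0 then g l / Real.sqrt (ρ l) else 0)
  have h1 : ∀ l ∈ s, Real.sqrt (ρ l) * (if ρ l ≠ 0 then g l / Real.sqrt (ρ l) else 0)
      = g l := by
    intro l hl
    split_ifs with hne
    · have hpos : 0 < ρ l := (hρ l).lt_of_ne (Ne.symm hne)
      field_simp [Real.sqrt_ne_zero'.mpr hpos]
    · simp [hsupp l hl (not_not.mp hne)]
  have h2 : ∀ l ∈ s, Real.sqrt (ρ l) ^ 2 = ρ l := fun l _ => Real.sq_sqrt (hρ l)
  have h3 : ∀ l ∈ s, (if ρ l ≠ 0 then g l / Real.sqrt (ρ l) else 0) ^ 2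
      = (if ρ l ≠ 0 then (ρ l)⁻¹ * g l ^ 2 else 0) := by
    intro l hl
    split_ifs with hne
    · rw [div_pow, Real.sq_sqrt (hρ l), div_eq_inv_mul]
    · simp
  rw [Finset.sum_congr rfl h1, Finset.sum_congr rfl h2, Finset.sum_congr rfl h3] at h
  exact h

end Aux

section Aux2

open Finset

variable {n m L N : ℕ} (S : Eu n ≃ₗ[ℝ] Eu n) {B : Fin L → Fin N}
  {d : Fin N → ℝ} (Φ : Fin L → Eu n)

lemma fiber_card_pos (hB : Function.Surjective B) (i : Fin N) :
    0 < ((Finset.univ.filter (fun l => B l = i)).card : ℝ) := by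
  obtain ⟨l, hl⟩ := hB i
  have : l ∈ Finset.univ.filter (fun l => B l = i) := by simp [hl]
  exact_mod_cast Finset.card_pos.mpr ⟨l, this⟩

lemma rhoOpt_nonneg (hd : ∀ i, 0 < d i) (l : Fin L) : 0 ≤ rhoOpt S B d Φ l := by
  unfold rhoOpt
  split_ifs with h
  · exact div_nonneg (hd _).le (Nat.cast_nonneg _)
  · have hT : 0 < Tfun S B Φ (B l) := (Tfun_nonneg S B Φ _).lt_of_ne (Ne.symm h)
    exact div_nonneg (mul_nonneg (hd _).le (norm_nonneg _)) hT.le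

lemma rhoOpt_sum (hB : Function.Surjective B) (hd : ∀ i, 0 < d i) (i : Fin N) :
    ∑ l ∈ Finset.univ.filter (fun l => B l = i), rhoOpt S B d Φ l = d i := by
  have hcongr : ∀ l ∈ Finset.univ.filter (fun l => B l = i), rhoOpt S B d Φ l =
      if Tfun S B Φ i = 0 then
        d i / (Finset.univ.filter (fun l' => B l' = i)).card
      else d i * ‖S (Φ l)‖ / Tfun S B Φ i := by
    intro l hl
    simp only [mem_filter] at hl
    unfold rhoOpt
    rw [hl.2]
  rw [Finset.sum_congr rfl hcongr]
  by_cases hTi : Tfun S B Φ i = 0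
  · simp only [hTi, if_true]
    rw [Finset.sum_const, nsmul_eq_mul]
    have := fiber_card_pos hB i
    field_simp
  · simp only [hTi, if_false]
    rw [← Finset.sum_div, ← Finset.mul_sum]
    have : ∑ l ∈ Finset.univ.filter (fun l => B l = i), ‖S (Φ l)‖ = Tfun S B Φ i := rfl
    rw [this]
    field_simp

lemma rhoOpt_supp (hB : Function.Surjective B) (hd : ∀ i, 0 < d i) (l : Fin L)
    (h0 : rhoOpt S B d Φ l = 0) : Φ l = 0 := by
  unfold rhoOpt at h0
  split_ifs at h0 with hTi
  · exact absurd h0 (ne_of_gt (div_pos (hd (B l)) (fiber_card_pos hB (B l))))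
  · have hT : 0 < Tfun S B Φ (B l) := (Tfun_nonneg S B Φ _).lt_of_ne (Ne.symm hTi)
    have hnorm : ‖S (Φ l)‖ = 0 := by
      have hd' := (hd (B l)).ne'
      have hT' := hT.ne'
      field_simp at h0
      rcases mul_eq_zero.mp (h0.trans (mul_zero _)) with h | h
      · exact absurd h hd'
      · exact h
    have : S (Φ l) = 0 := norm_eq_zero.mp hnorm
    exact (LinearEquiv.map_eq_zero_iff S).mp this

lemma fiber_sum_opt (hB : Function.Surjective B) (hd : ∀ i, 0 < d i) (i : Fin N) :
    ∑ l ∈ Finset.univ.filter (fun l => B l = i), ‖S (Wdag (rhoOpt S B d Φ) Φ l)‖ ^ 2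
      = (d i)⁻¹ * (Tfun S B Φ i) ^ 2 := by
  have hcongr : ∀ l ∈ Finset.univ.filter (fun l => B l = i),
      ‖S (Wdag (rhoOpt S B d Φ) Φ l)‖ ^ 2 = (d i)⁻¹ * Tfun S B Φ i * ‖S (Φ l)‖ := by
    intro l hl
    simp only [mem_filter] at hl
    rw [wdag_term S _ Φ l (rhoOpt_nonneg S Φ hd l)]
    by_cases hTi : Tfun S B Φ i = 0
    · have hρ : rhoOpt S B d Φ l ≠ 0 := by
        unfold rhoOpt
        rw [hl.2, if_pos hTi]
        exact ne_of_gt (div_pos (hd i) (fiber_card_pos hB i))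
      have hn0 : ‖S (Φ l)‖ = 0 := by
        have := (Finset.sum_eq_zero_iff_of_nonneg
          (fun l _ => norm_nonneg (S (Φ l)))).mp hTi l (by simp [hl.2])
        exact this
      rw [if_pos hρ, hn0]
      ring
    · have hT : 0 < Tfun S B Φ i := (Tfun_nonneg S B Φ _).lt_of_ne (Ne.symm hTi)
      have hρeq : rhoOpt S B d Φ l = d i * ‖S (Φ l)‖ / Tfun S B Φ i := by
        unfold rhoOpt; rw [hl.2, if_neg hTi]
      by_cases hn : ‖S (Φ l)‖ = 0
      · have : rhoOpt S B d Φ l = 0 := by rw [hρeq, hn]; ring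
        rw [if_neg (by simpa using this), hn]
        ring
      · have hρne : rhoOpt S B d Φ l ≠ 0 := by
          have hnp : 0 < ‖S (Φ l)‖ := (norm_nonneg _).lt_of_ne (Ne.symm hn)
          rw [hρeq]
          exact ne_of_gt (div_pos (mul_pos (hd i) hnp) hT)
        rw [if_pos hρne, hρeq]
        field_simp [hn, (hd i).ne', hT.ne']
  rw [Finset.sum_congr rfl hcongr, ← Finset.mul_sum]
  have : ∑ l ∈ Finset.univ.filter (fun l => B l = i), ‖S (Φ l)‖ = Tfun S B Φ i := rfl
  rw [this]
  ring

end Aux2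

/-- Partial minimization attainment, from the proof of Proposition 4.2. -/
theorem stmt8 {n m L N : ℕ} (hL : 1 ≤ L)
    (A : (Fin L → Eu n) →ₗ[ℝ] Eu m) (φ : Eu m) (S : Eu n ≃ₗ[ℝ] Eu n)
    {α : ℝ} (hα : 0 < α)
    {B : Fin L → Fin N} (hB : Function.Surjective B)
    {d : Fin N → ℝ} (hd : ∀ i, 0 < d i) :
    ∀ Φ : Fin L → Eu n,
      (∃ ρ : Fin L → ℝ, (Φ, ρ) ∈ Dom B d ∧
        Ffun A φ S α Φ ρ = Gfun A φ S α B d Φ) ∧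
      IsLeast {x : ℝ | ∃ ρ : Fin L → ℝ, (Φ, ρ) ∈ Dom B d ∧ x = Ffun A φ S α Φ ρ}
        (Gfun A φ S α B d Φ) := by
  intro Φ
  have hmem : (Φ, rhoOpt S B d Φ) ∈ Dom B d :=
    ⟨⟨rhoOpt_nonneg S Φ hd, rhoOpt_sum S Φ hB hd⟩,
      fun l hl => rhoOpt_supp S Φ hB hd l hl⟩
  have heq : Ffun A φ S α Φ (rhoOpt S B d Φ) = Gfun A φ S α B d Φ := by
    unfold Ffun Gfun
    congr 1
    congr 1
    rw [← Finset.sum_fiberwise Finset.univ B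
      (fun l => ‖S (Wdag (rhoOpt S B d Φ) Φ l)‖ ^ 2)]
    exact Finset.sum_congr rfl fun i _ => fiber_sum_opt S Φ hB hd i
  refine ⟨⟨rhoOpt S B d Φ, hmem, heq⟩, ⟨rhoOpt S B d Φ, hmem, heq.symm⟩, ?_⟩
  rintro x ⟨ρ', ⟨⟨hnn, hsum⟩, hsupp⟩, rfl⟩
  unfold Ffun Gfun
  have key : ∑ i, (d i)⁻¹ *
      (∑ l ∈ Finset.univ.filter (fun l => B l = i), ‖S (Φ l)‖) ^ 2
      ≤ ∑ l, ‖S (Wdag ρ' Φ l)‖ ^ 2 := by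
    rw [← Finset.sum_fiberwise Finset.univ B (fun l => ‖S (Wdag ρ' Φ l)‖ ^ 2)]
    refine Finset.sum_le_sum fun i _ => ?_
    have hterm : ∀ l ∈ Finset.univ.filter (fun l => B l = i),
        ‖S (Wdag ρ' Φ l)‖ ^ 2 =
          (if ρ' l ≠ 0 then (ρ' l)⁻¹ * ‖S (Φ l)‖ ^ 2 else 0) :=
      fun l _ => wdag_term S ρ' Φ l (hnn l)
    rw [Finset.sum_congr rfl hterm]
    have hcs := cs_fiber (Finset.univ.filter (fun l => B l = i)) ρ'
      (fun l => ‖S (Φ l)‖) hnn (fun l => norm_nonneg _)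
      (fun l _ h0 => by have h1 : Φ l = 0 := hsupp l h0; simp [h1])
    rw [hsum i] at hcs
    exact le_trans (mul_le_mul_of_nonneg_left hcs (inv_nonneg.mpr (hd i).le))
      (le_of_eq (inv_mul_cancel_left₀ (hd i).ne' _))
  have hk := mul_le_mul_of_nonneg_left key hα.le
  linarith
end

section
/- (Proposition 4.3, existence for problem (3.9)) There exists a pair (Ψ*, ρ*) with Ψ* : Fin L → E and ρ* ∈ Γ such that K(Ψ*, ρ*) ≤ K(Ψ, ρ) for all Ψ : Fin L → E and all ρ ∈ Γ. -/
open Finset RealInnerProductSpace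

/-- Proposition 4.3, existence for problem (3.9). -/
theorem stmt9 {n m L N : ℕ} (hL : 1 ≤ L)
    (A : (Fin L → Eu n) →ₗ[ℝ] Eu m) (φ : Eu m) (S : Eu n ≃ₗ[ℝ] Eu n)
    {α : ℝ} (hα : 0 < α)
    {B : Fin L → Fin N} (hB : Function.Surjective B)
    {d : Fin N → ℝ} (hd : ∀ i, 0 < d i) :
    ∃ (Ψs : Fin L → Eu n) (ρs : Fin L → ℝ), ρs ∈ Gam B d ∧
      ∀ (Ψ : Fin L → Eu n), ∀ ρ ∈ Gam B d,
        Kfun A φ S α Ψs ρs ≤ Kfun A φ S α Ψ ρ := by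
  classical
  -- Γ is compact
  have hΓclosed : IsClosed (Gam B d) := by
    have : Gam B d = (⋂ l, {ρ : Fin L → ℝ | 0 ≤ ρ l}) ∩
        ⋂ i, {ρ : Fin L → ℝ |
          ∑ l ∈ Finset.univ.filter (fun l => B l = i), ρ l = d i} := by
      ext ρ; simp [Gam, Set.mem_iInter]
    rw [this]
    exact (isClosed_iInter fun l =>
        isClosed_le continuous_const (continuous_apply l)).inter
      (isClosed_iInter fun i => isClosed_eq
        (continuous_finset_sum _ fun l _ => continuous_apply l) continuous_const)
  have hΓsub : Gam B d ⊆ Set.pi Set.univ fun l => Set.Icc (0:ℝ) (d (B l)) := by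
    rintro ρ ⟨h0, hs⟩ l _
    refine ⟨h0 l, ?_⟩
    rw [← hs (B l)]
    exact Finset.single_le_sum (fun l' _ => h0 l')
      (by simp)
  have hΓcomp : IsCompact (Gam B d) :=
    (isCompact_univ_pi fun l => isCompact_Icc).of_isClosed_subset hΓclosed hΓsub
  -- a point of Γ
  set ρ₀ : Fin L → ℝ := fun l =>
    d (B l) / (Finset.univ.filter (fun l' => B l' = B l)).card with hρ₀def
  have hcard : ∀ i : Fin N,
      (0:ℝ) < (Finset.univ.filter (fun l' => B l' = i)).card := by
    intro i
    obtain ⟨l, hl⟩ := hB i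
    have : l ∈ Finset.univ.filter (fun l' => B l' = i) := by simp [hl]
    exact_mod_cast Finset.card_pos.mpr ⟨l, this⟩
  have hρ₀ : ρ₀ ∈ Gam B d := by
    constructor
    · intro l
      exact div_nonneg (hd _).le (Nat.cast_nonneg _)
    · intro i
      have : ∀ l ∈ Finset.univ.filter (fun l' => B l' = i),
          ρ₀ l = d i / (Finset.univ.filter (fun l' => B l' = i)).card := by
        intro l hl
        have hBl : B l = i := by simpa using hl
        simp [hρ₀def, hBl]
      rw [Finset.sum_congr rfl this, Finset.sum_const, nsmul_eq_mul,
        mul_div_cancel₀]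
      exact ne_of_gt (hcard i)
  -- continuity of K as a function of the pair
  have hScont : Continuous S := S.toLinearMap.continuous_of_finiteDimensional
  have hAcont : Continuous A := A.continuous_of_finiteDimensional
  set f : (Fin L → Eu n) × (Fin L → ℝ) → ℝ := fun p => Kfun A φ S α p.1 p.2
    with hfdef
  have hf : Continuous f := by
    have hW : Continuous fun p : (Fin L → Eu n) × (Fin L → ℝ) => Wmap p.2 p.1 := by
      refine continuous_pi fun l => ?_
      exact (Real.continuous_sqrt.comp
          ((continuous_apply l).comp continuous_snd)).smul
        ((continuous_apply l).comp continuous_fst)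
    refine Continuous.add ?_ ?_
    · exact (((hAcont.comp hW).sub continuous_const).norm).pow 2
    · exact continuous_const.mul (continuous_finset_sum _ fun l _ =>
        ((hScont.comp ((continuous_apply l).comp continuous_fst)).norm).pow 2)
  -- coercivity constant
  set C : ℝ := ‖LinearMap.toContinuousLinearMap S.symm.toLinearMap‖ with hCdef
  have hC0 : 0 ≤ C := norm_nonneg _
  have hC1 : (0:ℝ) < C + 1 := by linarith
  have hbound : ∀ x : Eu n, ‖x‖ ≤ (C + 1) * ‖S x‖ := by
    intro x
    have h1 := (LinearMap.toContinuousLinearMap S.symm.toLinearMap).le_opNorm (S x)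
    simp only [LinearMap.coe_toContinuousLinearMap', LinearEquiv.coe_coe,
      LinearEquiv.symm_apply_apply] at h1
    rw [← hCdef] at h1
    nlinarith [norm_nonneg (S x)]
  set M : ℝ := ‖φ‖ ^ 2 with hMdef
  have hM0 : 0 ≤ M := sq_nonneg _
  set R : ℝ := (C + 1) * (Real.sqrt (M / α) + 1) with hRdef
  have hR0 : 0 ≤ R := by
    have := Real.sqrt_nonneg (M / α)
    positivity
  -- compact domain and minimizer on it
  have hKc : IsCompact ((Metric.closedBall (0 : Fin L → Eu n) R) ×ˢ Gam B d) :=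
    (isCompact_closedBall _ _).prod hΓcomp
  have h0mem : (0 : Fin L → Eu n) ∈ Metric.closedBall (0 : Fin L → Eu n) R :=
    Metric.mem_closedBall_self hR0
  have hne : ((Metric.closedBall (0 : Fin L → Eu n) R) ×ˢ Gam B d).Nonempty :=
    ⟨(0, ρ₀), Set.mk_mem_prod h0mem hρ₀⟩
  obtain ⟨p, hp, hpmin'⟩ := hKc.exists_isMinOn hne hf.continuousOn
  have hpmin := isMinOn_iff.mp hpmin'
  refine ⟨p.1, p.2, hp.2, ?_⟩
  -- value at (0, ρ₀) is M
  have hval : f (0, ρ₀) = M := by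
    have hW0 : Wmap ρ₀ (0 : Fin L → Eu n) = 0 := by
      funext l; simp [Wmap]
    simp [hfdef, Kfun, hW0, hMdef]
  have hmin_le_M : f p ≤ M := by
    rw [← hval]
    exact hpmin (0, ρ₀) (Set.mk_mem_prod h0mem hρ₀)
  intro Ψ ρ hρ
  by_cases hΨ : ‖Ψ‖ ≤ R
  · exact hpmin (Ψ, ρ) (Set.mk_mem_prod (mem_closedBall_zero_iff.mpr hΨ) hρ)
  · -- outside the ball the functional exceeds M
    have : ∃ l, R < ‖Ψ l‖ := by
      by_contra h
      push_neg at h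
      exact hΨ (pi_norm_le_iff_of_nonneg hR0 |>.mpr h)
    obtain ⟨l, hl⟩ := this
    have hSl : Real.sqrt (M / α) + 1 < ‖S (Ψ l)‖ := by
      have h1 := hbound (Ψ l)
      have h2 : (C + 1) * (Real.sqrt (M / α) + 1) < (C + 1) * ‖S (Ψ l)‖ := by
        rw [← hRdef]; exact lt_of_lt_of_le hl h1
      exact (mul_lt_mul_iff_right₀ hC1).mp h2
    have hsq : Real.sqrt (M / α) ^ 2 = M / α :=
      Real.sq_sqrt (div_nonneg hM0 hα.le)
    have hkey : M < α * ‖S (Ψ l)‖ ^ 2 := by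
      have h0 : 0 ≤ Real.sqrt (M / α) := Real.sqrt_nonneg _
      have : M / α < ‖S (Ψ l)‖ ^ 2 := by nlinarith
      calc M = α * (M / α) := by field_simp
        _ < α * ‖S (Ψ l)‖ ^ 2 := by exact (mul_lt_mul_iff_right₀ hα).mpr this
    have hsum : ‖S (Ψ l)‖ ^ 2 ≤ ∑ l', ‖S (Ψ l')‖ ^ 2 :=
      Finset.single_le_sum (f := fun l' => ‖S (Ψ l')‖ ^ 2)
        (fun _ _ => sq_nonneg _) (Finset.mem_univ l)
    have : M < Kfun A φ S α Ψ ρ := by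
      have h3 : α * ‖S (Ψ l)‖ ^ 2 ≤ α * ∑ l', ‖S (Ψ l')‖ ^ 2 :=
        (mul_le_mul_iff_right₀ hα).mpr hsum
      have h4 : 0 ≤ ‖A (Wmap ρ Ψ) - φ‖ ^ 2 := sq_nonneg _
      unfold Kfun
      linarith
    linarith [hmin_le_M]
end

section
/- (Proposition 4.3, uniqueness for the reduced problem) If the linear map A is injective, then the minimizer of G is unique: if Φ₁ and Φ₂ both satisfy G(Φⱼ) ≤ G(Φ) for all Φ : Fin L → E (j = 1, 2), then Φ₁ = Φ₂. -/
open Finset RealInnerProductSpace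

/-- Proposition 4.3, uniqueness for the reduced problem. -/
theorem stmt12 {n m L N : ℕ} (hL : 1 ≤ L)
    (A : (Fin L → Eu n) →ₗ[ℝ] Eu m) (φ : Eu m) (S : Eu n ≃ₗ[ℝ] Eu n)
    {α : ℝ} (hα : 0 < α)
    {B : Fin L → Fin N} (hB : Function.Surjective B)
    {d : Fin N → ℝ} (hd : ∀ i, 0 < d i)
    (hA : Function.Injective A)
    (Φ₁ Φ₂ : Fin L → Eu n)
    (h₁ : ∀ Φ : Fin L → Eu n, Gfun A φ S α B d Φ₁ ≤ Gfun A φ S α B d Φ)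
    (h₂ : ∀ Φ : Fin L → Eu n, Gfun A φ S α B d Φ₂ ≤ Gfun A φ S α B d Φ) :
    Φ₁ = Φ₂ := by
  by_contra hne
  have hG12 : Gfun A φ S α B d Φ₁ = Gfun A φ S α B d Φ₂ :=
    le_antisymm (h₁ Φ₂) (h₂ Φ₁)
  set Φ : Fin L → Eu n := fun l => (1/2 : ℝ) • (Φ₁ l + Φ₂ l) with hΦ
  have hAΦ : A Φ = (1/2:ℝ) • (A Φ₁ + A Φ₂) := by
    have hΦ' : Φ = (1/2:ℝ) • (Φ₁ + Φ₂) := rfl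
    rw [hΦ', map_smul, map_add]
  have hab : A Φ₁ - A Φ₂ ≠ 0 := sub_ne_zero.mpr (fun h => hne (hA h))
  have hab' : (0:ℝ) < ‖A Φ₁ - A Φ₂‖ := norm_pos_iff.mpr hab
  -- strict inequality for the data-fit term
  have hterm1 : ‖A Φ - φ‖^2 < (‖A Φ₁ - φ‖^2 + ‖A Φ₂ - φ‖^2)/2 := by
    have h1 : A Φ - φ = (1/2:ℝ) • ((A Φ₁ - φ) + (A Φ₂ - φ)) := by
      rw [hAΦ]; module
    have h2 : (A Φ₁ - φ) - (A Φ₂ - φ) = A Φ₁ - A Φ₂ := by abel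
    have hpar := parallelogram_law_with_norm ℝ (A Φ₁ - φ) (A Φ₂ - φ)
    rw [h2] at hpar
    have h3 : ‖A Φ - φ‖ = (1/2:ℝ) * ‖(A Φ₁ - φ) + (A Φ₂ - φ)‖ := by
      rw [h1, norm_smul]; norm_num
    rw [h3]
    nlinarith [norm_nonneg ((A Φ₁ - φ) + (A Φ₂ - φ)), norm_nonneg (A Φ₁ - φ),
      norm_nonneg (A Φ₂ - φ), sq_nonneg ‖A Φ₁ - A Φ₂‖]
  -- convexity of the penalty term
  have hterm2 : ∀ i, (d i)⁻¹ * (∑ l ∈ Finset.univ.filter (fun l => B l = i), ‖S (Φ l)‖)^2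
      ≤ ((d i)⁻¹ * (∑ l ∈ Finset.univ.filter (fun l => B l = i), ‖S (Φ₁ l)‖)^2
        + (d i)⁻¹ * (∑ l ∈ Finset.univ.filter (fun l => B l = i), ‖S (Φ₂ l)‖)^2)/2 := by
    intro i
    set s := ∑ l ∈ Finset.univ.filter (fun l => B l = i), ‖S (Φ l)‖ with hs
    set s₁ := ∑ l ∈ Finset.univ.filter (fun l => B l = i), ‖S (Φ₁ l)‖ with hs1
    set s₂ := ∑ l ∈ Finset.univ.filter (fun l => B l = i), ‖S (Φ₂ l)‖ with hs2
    have hs0 : 0 ≤ s := Finset.sum_nonneg (fun l _ => norm_nonneg _)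
    have hkey : s ≤ (s₁ + s₂)/2 := by
      rw [hs, hs1, hs2, ← Finset.sum_add_distrib]
      rw [show (∑ l ∈ Finset.univ.filter (fun l => B l = i), (‖S (Φ₁ l)‖ + ‖S (Φ₂ l)‖))/2
        = ∑ l ∈ Finset.univ.filter (fun l => B l = i), (‖S (Φ₁ l)‖ + ‖S (Φ₂ l)‖)/2 by
          rw [Finset.sum_div]]
      apply Finset.sum_le_sum
      intro l _
      have : S (Φ l) = (1/2:ℝ) • (S (Φ₁ l) + S (Φ₂ l)) := by
        simp [hΦ, map_smul, map_add]
      have h12 : ‖(1/2:ℝ)‖ = 1/2 := by norm_num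
      rw [this, norm_smul, h12]
      have := norm_add_le (S (Φ₁ l)) (S (Φ₂ l))
      linarith
    have hsq' : s^2 ≤ ((s₁+s₂)/2)^2 := pow_le_pow_left₀ hs0 hkey 2
    have hsq : s^2 ≤ (s₁^2 + s₂^2)/2 := by nlinarith [sq_nonneg (s₁ - s₂)]
    have hdi : (0:ℝ) ≤ (d i)⁻¹ := le_of_lt (inv_pos.mpr (hd i))
    calc (d i)⁻¹ * s^2 ≤ (d i)⁻¹ * ((s₁^2 + s₂^2)/2) :=
          mul_le_mul_of_nonneg_left hsq hdi
      _ = ((d i)⁻¹ * s₁^2 + (d i)⁻¹ * s₂^2)/2 := by ring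
  have hsum2 : ∑ i, (d i)⁻¹ * (∑ l ∈ Finset.univ.filter (fun l => B l = i), ‖S (Φ l)‖)^2
      ≤ (∑ i, (d i)⁻¹ * (∑ l ∈ Finset.univ.filter (fun l => B l = i), ‖S (Φ₁ l)‖)^2
        + ∑ i, (d i)⁻¹ * (∑ l ∈ Finset.univ.filter (fun l => B l = i), ‖S (Φ₂ l)‖)^2)/2 := by
    rw [← Finset.sum_add_distrib, Finset.sum_div]
    exact Finset.sum_le_sum (fun i _ => hterm2 i)
  have hlt : Gfun A φ S α B d Φ < Gfun A φ S α B d Φ₁ := by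
    have hmid : Gfun A φ S α B d Φ
        < (Gfun A φ S α B d Φ₁ + Gfun A φ S α B d Φ₂)/2 := by
      unfold Gfun
      have := mul_le_mul_of_nonneg_left hsum2 (le_of_lt hα)
      nlinarith
    linarith [hG12, hmid]
  exact absurd (h₁ Φ) (not_le.mpr hlt)
end

section
/- (Equality of optimal values of the full and reduced problems) The infimum of K over all (Ψ, ρ) with Ψ : Fin L → E and ρ ∈ Γ equals the infimum of G over all Φ : Fin L → E: sInf {K(Ψ, ρ) | Ψ : Fin L → E, ρ ∈ Γ} = sInf {G(Φ) | Φ : Fin L → E}. -/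
open Finset RealInnerProductSpace

noncomputable section AuxProofs

-- Direction 2: G(W_ρ Ψ) ≤ K(Ψ, ρ)
lemma lemA {n m L N : ℕ} (A : (Fin L → Eu n) →ₗ[ℝ] Eu m) (φ : Eu m)
    (S : Eu n ≃ₗ[ℝ] Eu n) {α : ℝ} (hα : 0 < α) (B : Fin L → Fin N) (d : Fin N → ℝ)
    (hd : ∀ i, 0 < d i) (Ψ : Fin L → Eu n) (ρ : Fin L → ℝ) (hρ : ρ ∈ Gam B d) :
    Gfun A φ S α B d (Wmap ρ Ψ) ≤ Kfun A φ S α Ψ ρ := by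
  obtain ⟨hnn, hsum⟩ := hρ
  unfold Gfun Kfun
  refine add_le_add le_rfl (mul_le_mul_of_nonneg_left ?_ hα.le)
  rw [← Finset.sum_fiberwise Finset.univ B (fun l => ‖S (Ψ l)‖ ^ 2)]
  refine Finset.sum_le_sum fun i _ => ?_
  have key : (∑ l ∈ Finset.univ.filter (fun l => B l = i), ‖S (Wmap ρ Ψ l)‖) ^ 2
      ≤ d i * ∑ l ∈ Finset.univ.filter (fun l => B l = i), ‖S (Ψ l)‖ ^ 2 := by
    have : ∀ l, ‖S (Wmap ρ Ψ l)‖ = Real.sqrt (ρ l) * ‖S (Ψ l)‖ := by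
      intro l
      simp [Wmap, map_smul, norm_smul, abs_of_nonneg (Real.sqrt_nonneg _)]
    simp_rw [this]
    calc (∑ l ∈ Finset.univ.filter (fun l => B l = i), Real.sqrt (ρ l) * ‖S (Ψ l)‖) ^ 2
        ≤ (∑ l ∈ Finset.univ.filter (fun l => B l = i), Real.sqrt (ρ l) ^ 2) *
          ∑ l ∈ Finset.univ.filter (fun l => B l = i), ‖S (Ψ l)‖ ^ 2 :=
          Finset.sum_mul_sq_le_sq_mul_sq _ _ _
      _ = d i * ∑ l ∈ Finset.univ.filter (fun l => B l = i), ‖S (Ψ l)‖ ^ 2 := by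
          congr 1
          rw [← hsum i]
          exact Finset.sum_congr rfl fun l _ => Real.sq_sqrt (hnn l)
  rw [inv_mul_le_iff₀ (hd i)]
  calc (∑ l ∈ Finset.univ.filter (fun l => B l = i), ‖S (Wmap ρ Ψ l)‖) ^ 2
      ≤ d i * ∑ l ∈ Finset.univ.filter (fun l => B l = i), ‖S (Ψ l)‖ ^ 2 := key
    _ = _ := by ring

-- Direction 1: exists (Ψ, ρ) with K = G(Φ)
lemma lemB {n m L N : ℕ} (A : (Fin L → Eu n) →ₗ[ℝ] Eu m) (φ : Eu m)
    (S : Eu n ≃ₗ[ℝ] Eu n) {α : ℝ} (hα : 0 < α) (B : Fin L → Fin N)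
    (hB : Function.Surjective B) (d : Fin N → ℝ) (hd : ∀ i, 0 < d i)
    (Φ : Fin L → Eu n) :
    ∃ (Ψ : Fin L → Eu n) (ρ : Fin L → ℝ), ρ ∈ Gam B d ∧
      Kfun A φ S α Ψ ρ = Gfun A φ S α B d Φ := by
  classical
  set T : Fin N → ℝ := fun i => ∑ l ∈ Finset.univ.filter (fun l => B l = i), ‖S (Φ l)‖
    with hT
  have hTnn : ∀ i, 0 ≤ T i := fun i => Finset.sum_nonneg fun l _ => norm_nonneg _
  have hcard : ∀ i, 0 < (Finset.univ.filter (fun l => B l = i)).card := by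
    intro i
    obtain ⟨l, hl⟩ := hB i
    exact Finset.card_pos.2 ⟨l, by simp [hl]⟩
  set ρ : Fin L → ℝ := fun l =>
    if T (B l) = 0 then d (B l) / (Finset.univ.filter (fun l' => B l' = B l)).card
    else d (B l) * ‖S (Φ l)‖ / T (B l) with hρdef
  have hρnn : ∀ l, 0 ≤ ρ l := by
    intro l
    rw [hρdef]
    dsimp only
    split_ifs with h
    · exact div_nonneg (hd _).le (Nat.cast_nonneg _)
    · exact div_nonneg (mul_nonneg (hd _).le (norm_nonneg _)) (hTnn _)
  -- if T (B l) = 0 then Φ l = 0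
  have hT0 : ∀ l, T (B l) = 0 → Φ l = 0 := by
    intro l h
    have : ‖S (Φ l)‖ = 0 := by
      have := (Finset.sum_eq_zero_iff_of_nonneg (fun x _ => norm_nonneg (S (Φ x)))).1 h l
        (by simp)
      exact this
    have : S (Φ l) = 0 := norm_eq_zero.1 this
    simpa using congrArg S.symm this
  have hρ0 : ∀ l, ρ l = 0 → Φ l = 0 := by
    intro l h
    by_cases hTl : T (B l) = 0
    · exact hT0 l hTl
    · simp only [hρdef, hTl, if_false] at h
      have : ‖S (Φ l)‖ = 0 := by
        rcases div_eq_zero_iff.1 h with h' | h'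
        · rcases mul_eq_zero.1 h' with h'' | h''
          · exact absurd h'' (hd (B l)).ne'
          · exact h''
        · exact absurd h' hTl
      simpa using congrArg S.symm (norm_eq_zero.1 this)
  have hρΓ : ρ ∈ Gam B d := by
    refine ⟨hρnn, fun i => ?_⟩
    have hco : ∀ l ∈ Finset.univ.filter (fun l => B l = i), B l = i :=
      fun l hl => (Finset.mem_filter.1 hl).2
    by_cases hTi : T i = 0
    · have : ∀ l ∈ Finset.univ.filter (fun l => B l = i),
          ρ l = d i / (Finset.univ.filter (fun l' => B l' = i)).card := by
        intro l hl
        have hBl := hco l hl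
        simp only [hρdef, hBl, hTi, if_true]
      rw [Finset.sum_congr rfl this, Finset.sum_const, nsmul_eq_mul, mul_comm,
        div_mul_cancel₀ _ (by exact_mod_cast (hcard i).ne' : ((Finset.univ.filter (fun l => B l = i)).card : ℝ) ≠ 0)]
    · have : ∀ l ∈ Finset.univ.filter (fun l => B l = i),
          ρ l = d i * ‖S (Φ l)‖ / T i := by
        intro l hl
        have hBl := hco l hl
        simp only [hρdef, hBl, hTi, if_false]
      rw [Finset.sum_congr rfl this, ← Finset.sum_div, ← Finset.mul_sum]
      rw [show (∑ l ∈ Finset.univ.filter (fun l => B l = i), ‖S (Φ l)‖) = T i from rfl]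
      rw [mul_div_assoc, div_self hTi, mul_one]
  refine ⟨Wdag ρ Φ, ρ, hρΓ, ?_⟩
  have hWW : Wmap ρ (Wdag ρ Φ) = Φ := by
    funext l
    by_cases h : ρ l = 0
    · simp [Wmap, Wdag, h, hρ0 l h]
    · have hpos : 0 < ρ l := (hρnn l).lt_of_ne (Ne.symm h)
      have hs : Real.sqrt (ρ l) ≠ 0 := by positivity
      simp [Wmap, Wdag, h, smul_smul, mul_inv_cancel₀ hs]
  unfold Kfun Gfun
  rw [hWW]
  congr 1
  congr 1
  rw [← Finset.sum_fiberwise Finset.univ B (fun l => ‖S (Wdag ρ Φ l)‖ ^ 2)]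
  refine Finset.sum_congr rfl fun i _ => ?_
  have hco : ∀ l ∈ Finset.univ.filter (fun l => B l = i), B l = i :=
    fun l hl => (Finset.mem_filter.1 hl).2
  by_cases hTi : T i = 0
  · rw [show (T i) = ∑ l ∈ Finset.univ.filter (fun l => B l = i), ‖S (Φ l)‖ from rfl] at hTi
    have hzero : ∀ l ∈ Finset.univ.filter (fun l => B l = i), ‖S (Wdag ρ Φ l)‖ ^ 2 = 0 := by
      intro l hl
      have : Φ l = 0 := hT0 l (by rw [hco l hl]; exact hTi)
      simp [Wdag, this]
    rw [Finset.sum_eq_zero hzero, hTi]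
    simp
  · have hterm : ∀ l ∈ Finset.univ.filter (fun l => B l = i),
        ‖S (Wdag ρ Φ l)‖ ^ 2 = ‖S (Φ l)‖ * T i / d i := by
      intro l hl
      have hBl := hco l hl
      by_cases hΦl : ‖S (Φ l)‖ = 0
      · have : Φ l = 0 := by simpa using congrArg S.symm (norm_eq_zero.1 hΦl)
        simp [Wdag, this, hΦl]
      · have hρl : ρ l = d i * ‖S (Φ l)‖ / T i := by
          simp only [hρdef, hBl, hTi, if_false]
        have hρpos : 0 < ρ l := by
          rw [hρl]
          have h0 : 0 < d i := hd i
          have h1 : 0 < ‖S (Φ l)‖ := lt_of_le_of_ne (norm_nonneg _) (Ne.symm hΦl)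
          have h2 : 0 < T i := (hTnn i).lt_of_ne (Ne.symm hTi)
          exact div_pos (mul_pos h0 h1) h2
        have hW : Wdag ρ Φ l = (Real.sqrt (ρ l))⁻¹ • Φ l := if_pos hρpos.ne'
        have : ‖S (Wdag ρ Φ l)‖ ^ 2 = ‖S (Φ l)‖ ^ 2 / ρ l := by
          rw [hW, map_smul, norm_smul, Real.norm_eq_abs,
            abs_of_nonneg (inv_nonneg.2 (Real.sqrt_nonneg _)), mul_pow, inv_pow,
            Real.sq_sqrt hρpos.le, inv_mul_eq_div]
        rw [this, hρl]
        have h0 : (d i) ≠ 0 := (hd i).ne'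
        rw [div_div_eq_mul_div, pow_two, mul_comm (d i) ‖S (Φ l)‖, mul_assoc,
          mul_div_assoc, mul_div_mul_left _ _ hΦl, mul_div_assoc]
    rw [Finset.sum_congr rfl hterm, ← Finset.sum_div, ← Finset.sum_mul]
    rw [show (∑ l ∈ Finset.univ.filter (fun l => B l = i), ‖S (Φ l)‖) = T i from rfl]
    rw [pow_two, div_eq_inv_mul]

end AuxProofs

/-- Equality of optimal values of the full and reduced problems. -/
theorem stmt16 {n m L N : ℕ} (hL : 1 ≤ L)
    (A : (Fin L → Eu n) →ₗ[ℝ] Eu m) (φ : Eu m) (S : Eu n ≃ₗ[ℝ] Eu n)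
    {α : ℝ} (hα : 0 < α)
    {B : Fin L → Fin N} (hB : Function.Surjective B)
    {d : Fin N → ℝ} (hd : ∀ i, 0 < d i) :
    sInf {x : ℝ | ∃ (Ψ : Fin L → Eu n) (ρ : Fin L → ℝ),
        ρ ∈ Gam B d ∧ x = Kfun A φ S α Ψ ρ} =
      sInf {x : ℝ | ∃ Φ : Fin L → Eu n, x = Gfun A φ S α B d Φ} := by
  have hGne : {x : ℝ | ∃ Φ : Fin L → Eu n, x = Gfun A φ S α B d Φ}.Nonempty :=
    ⟨_, 0, rfl⟩
  have hKbdd : BddBelow {x : ℝ | ∃ (Ψ : Fin L → Eu n) (ρ : Fin L → ℝ),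
      ρ ∈ Gam B d ∧ x = Kfun A φ S α Ψ ρ} := by
    refine ⟨0, ?_⟩
    rintro x ⟨Ψ, ρ, hρ, rfl⟩
    exact add_nonneg (sq_nonneg _)
      (mul_nonneg hα.le (Finset.sum_nonneg fun l _ => sq_nonneg _))
  have hGbdd : BddBelow {x : ℝ | ∃ Φ : Fin L → Eu n, x = Gfun A φ S α B d Φ} := by
    refine ⟨0, ?_⟩
    rintro x ⟨Φ, rfl⟩
    refine add_nonneg (sq_nonneg _) (mul_nonneg hα.le (Finset.sum_nonneg fun i _ =>
      mul_nonneg (inv_nonneg.2 (hd i).le) (sq_nonneg _)))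
  obtain ⟨Ψ0, ρ0, hρ0, hK0⟩ := lemB A φ S hα B hB d hd 0
  have hKne : {x : ℝ | ∃ (Ψ : Fin L → Eu n) (ρ : Fin L → ℝ),
      ρ ∈ Gam B d ∧ x = Kfun A φ S α Ψ ρ}.Nonempty := ⟨_, Ψ0, ρ0, hρ0, rfl⟩
  apply le_antisymm
  · refine le_csInf hGne ?_
    rintro x ⟨Φ, rfl⟩
    obtain ⟨Ψ, ρ, hρ, hK⟩ := lemB A φ S hα B hB d hd Φ
    calc sInf {x : ℝ | ∃ (Ψ : Fin L → Eu n) (ρ : Fin L → ℝ),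
          ρ ∈ Gam B d ∧ x = Kfun A φ S α Ψ ρ}
        ≤ Kfun A φ S α Ψ ρ := csInf_le hKbdd ⟨Ψ, ρ, hρ, rfl⟩
      _ = Gfun A φ S α B d Φ := hK
  · refine le_csInf hKne ?_
    rintro x ⟨Ψ, ρ, hρ, rfl⟩
    exact (csInf_le hGbdd ⟨Wmap ρ Ψ, rfl⟩).trans (lemA A φ S hα B d hd Ψ ρ hρ)
end
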